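/- Let K be a compact Hausdorff space, T a bounded operator on C(K), and suppose there exist a sequence of pairwise disjoint open sets (U_n) in K and measures (ν_n) in the unit ball of M(K) = C(K)* with |T*ν_n|(U_n) > c for all n. Then for every ε > 0 there exists a bounded operator V : c₀ → C(K) with ‖V‖ ≤ 1 such that inf_n ‖TV e_n‖ > c − 3ε, where (e_n) is the canonical basis of c₀. -/

import Mathlib

open scoped ZeroAtInfty

/-- The `n`-th canonical basis vector of `c₀ = C₀(ℕ, ℝ)`. -/
noncomputable def eSeq (n : ℕ) : C₀(ℕ, ℝ) where
  toFun := fun m => if m = n then (1 : ℝ) else 0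
  continuous_toFun := continuous_of_discreteTopology
  zero_at_infty' := by
    refine Filter.Tendsto.congr' ?_ tendsto_const_nhds
    filter_upwards [Filter.mem_cocompact.mpr ⟨{n}, isCompact_singleton, subset_rfl⟩] with m hm
    simp only [Set.mem_compl_iff, Set.mem_singleton_iff] at hm
    simp [hm]

/-- The variation of a functional `φ ∈ C(K)* = M(K)` on a set `U`:
`|φ|(U) = sup {|φ f| : ‖f‖ ≤ 1, supp f ⊆ U}` (which for open `U` is the total variation of
the representing regular Borel measure on `U`). -/
noncomputable def varOn {K : Type*} [TopologicalSpace K] [CompactSpace K]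
    (φ : C(K, ℝ) →L[ℝ] ℝ) (U : Set K) : ℝ :=
  sSup {r : ℝ | ∃ f : C(K, ℝ), ‖f‖ ≤ 1 ∧ (∀ x ∉ U, f x = 0) ∧ r = |φ f|}

/-!
The functions `f n` witnessing `|T*ν_n|(U_n) > c` are supported in the disjoint sets `U_n`, so
at every point at most one of them is nonzero. Hence `V a = ∑ aₙ fₙ` converges for `a ∈ c₀`,
satisfies `‖V a‖ ≤ sup |aₙ|`, and sends `eₙ` to `fₙ`, with `‖T fₙ‖ ≥ |ν_n (T fₙ)| > c`.
-/

open Function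

lemma eSeq_apply (n m : ℕ) : eSeq n m = if m = n then 1 else 0 := rfl

lemma ZeroAtInftyContinuousMap.abs_apply_le_norm (a : C₀(ℕ, ℝ)) (n : ℕ) : |a n| ≤ ‖a‖ := by
  rw [← ZeroAtInftyContinuousMap.norm_toBCF_eq_norm]
  exact a.toBCF.norm_coe_le_norm n

section varOn

variable {K : Type*} [TopologicalSpace K] [CompactSpace K]

lemma exists_lt_abs_of_lt_varOn {φ : C(K, ℝ) →L[ℝ] ℝ} {U : Set K} {c : ℝ}
    (h : c < varOn φ U) : ∃ f : C(K, ℝ), ‖f‖ ≤ 1 ∧ support f ⊆ U ∧ c < |φ f| := by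
  obtain ⟨_, ⟨f, hf, hfU, rfl⟩, hc⟩ :=
    exists_lt_of_lt_csSup (by exact ⟨0, 0, by simp, fun _ _ => rfl, by simp⟩) h
  exact ⟨f, hf, fun x hx => by_contra fun hxU => hx (hfU x hxU), hc⟩

lemma exists_lt_norm_of_lt_varOn_comp {E : Type*} [NormedAddCommGroup E] [NormedSpace ℝ E]
    {ν : E →L[ℝ] ℝ} (hν : ‖ν‖ ≤ 1) {T : C(K, ℝ) →L[ℝ] E} {U : Set K} {c : ℝ}
    (h : c < varOn (ν.comp T) U) : ∃ f : C(K, ℝ), ‖f‖ ≤ 1 ∧ support f ⊆ U ∧ c < ‖T f‖ := by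
  obtain ⟨f, hf, hfU, hc⟩ := exists_lt_abs_of_lt_varOn h
  refine ⟨f, hf, hfU, hc.trans_le ?_⟩
  calc |ν (T f)| ≤ ‖ν‖ * ‖T f‖ := ν.le_opNorm _
    _ ≤ ‖T f‖ := mul_le_of_le_one_left (norm_nonneg _) hν

end varOn

lemma exists_forall_ne_apply_eq_zero {ι α M : Type*} [Nonempty ι] [Zero M] {f : ι → α → M}
    (hf : Pairwise (Disjoint on fun i => support (f i))) (x : α) : ∃ j, ∀ i ≠ j, f i x = 0 := by
  by_cases h : ∃ j, f j x ≠ 0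
  · obtain ⟨j, hj⟩ := h
    exact ⟨j, fun i hi => not_not.mp fun hi' => (hf hi).ne_of_mem hi' hj rfl⟩
  · push Not at h
    exact ⟨Classical.arbitrary ι, fun i _ => h i⟩

section DisjointSupport

variable {K E : Type*} [TopologicalSpace K] [CompactSpace K]
  [NormedAddCommGroup E] [NormedSpace ℝ E] {f : ℕ → C(K, E)}

lemma norm_sum_smul_le_of_pairwise_disjoint_support (hf₁ : ∀ n, ‖f n‖ ≤ 1)
    (hf : Pairwise (Disjoint on fun n => support (f n))) {b : ℕ → ℝ} {B : ℝ} (hB : 0 ≤ B)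
    (s : Finset ℕ) (hb : ∀ n ∈ s, |b n| ≤ B) : ‖∑ n ∈ s, b n • f n‖ ≤ B := by
  refine (ContinuousMap.norm_le _ hB).mpr fun x => ?_
  obtain ⟨m, hm⟩ := exists_forall_ne_apply_eq_zero (f := fun n => ⇑(f n)) hf x
  simp only [ContinuousMap.coe_sum, ContinuousMap.coe_smul, Finset.sum_apply, Pi.smul_apply]
  by_cases hms : m ∈ s
  · rw [Finset.sum_eq_single_of_mem m hms fun n _ hn => by rw [hm n hn, smul_zero], norm_smul]
    exact (mul_le_mul (hb m hms) ((f m).norm_coe_le_norm x |>.trans (hf₁ m)) (norm_nonneg _)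
      hB).trans_eq (mul_one B)
  · rw [Finset.sum_eq_zero fun n hn => by rw [hm n (ne_of_mem_of_not_mem hn hms), smul_zero],
      norm_zero]
    exact hB

variable [CompleteSpace E]

lemma summable_smul_of_pairwise_disjoint_support (hf₁ : ∀ n, ‖f n‖ ≤ 1)
    (hf : Pairwise (Disjoint on fun n => support (f n))) (a : C₀(ℕ, ℝ)) :
    Summable fun n => a n • f n := by
  refine summable_iff_vanishing_norm.mpr fun δ hδ => ?_
  have ha : Filter.Tendsto a Filter.atTop (nhds 0) :=
    cocompact_eq_atTop (α := ℕ) ▸ a.zero_at_infty'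
  obtain ⟨N, hN⟩ := Metric.tendsto_atTop.mp ha (δ / 2) (half_pos hδ)
  refine ⟨Finset.range N, fun t ht => ?_⟩
  refine (norm_sum_smul_le_of_pairwise_disjoint_support hf₁ hf (half_pos hδ).le t
    fun n hn => ?_).trans_lt (half_lt_self hδ)
  have hNn : N ≤ n := not_lt.mp fun h => Finset.disjoint_left.mp ht hn (Finset.mem_range.mpr h)
  simpa [Real.dist_eq] using (hN n hNn).le

theorem exists_c0_clm_of_pairwise_disjoint_support (hf₁ : ∀ n, ‖f n‖ ≤ 1)
    (hf : Pairwise (Disjoint on fun n => support (f n))) :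
    ∃ V : C₀(ℕ, ℝ) →L[ℝ] C(K, E), ‖V‖ ≤ 1 ∧ ∀ n, V (eSeq n) = f n := by
  have hsum := summable_smul_of_pairwise_disjoint_support hf₁ hf
  let V₀ : C₀(ℕ, ℝ) →ₗ[ℝ] C(K, E) :=
    { toFun := fun a => ∑' n, a n • f n
      map_add' := fun a b => by
        simp only [ZeroAtInftyContinuousMap.coe_add, Pi.add_apply, add_smul]
        exact (hsum a).tsum_add (hsum b)
      map_smul' := fun r a => by
        simp only [ZeroAtInftyContinuousMap.coe_smul, Pi.smul_apply, smul_eq_mul, mul_smul,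
          RingHom.id_apply]
        exact (hsum a).tsum_const_smul r }
  have hV₀ : ∀ a, ‖V₀ a‖ ≤ 1 * ‖a‖ := fun a => by
    rw [one_mul]
    exact le_of_tendsto' (hsum a).hasSum.norm fun s =>
      norm_sum_smul_le_of_pairwise_disjoint_support hf₁ hf (norm_nonneg a) s
        fun n _ => a.abs_apply_le_norm n
  refine ⟨V₀.mkContinuous 1 hV₀, V₀.mkContinuous_norm_le zero_le_one hV₀, fun n => ?_⟩
  show ∑' m, eSeq n m • f m = f n
  rw [tsum_eq_single n fun m hm => by simp [eSeq_apply, hm]]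
  simp [eSeq_apply]

end DisjointSupport

theorem exists_c0_operator_of_variation_bound_general
    {K : Type*} [TopologicalSpace K] [CompactSpace K]
    (T : C(K, ℝ) →L[ℝ] C(K, ℝ)) (c : ℝ)
    (U : ℕ → Set K)
    (hUdisj : Pairwise (Function.onFun Disjoint U))
    (ν : ℕ → (C(K, ℝ) →L[ℝ] ℝ)) (hν : ∀ n, ‖ν n‖ ≤ 1)
    (hvar : ∀ n, c < varOn ((ν n).comp T) (U n)) :
    ∀ ε : ℝ, 0 < ε →
      ∃ V : C₀(ℕ, ℝ) →L[ℝ] C(K, ℝ), ‖V‖ ≤ 1 ∧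
        c - 3 * ε < ⨅ n : ℕ, ‖T (V (eSeq n))‖ := by
  intro ε hε
  choose f hf₁ hfU hfT using fun n => exists_lt_norm_of_lt_varOn_comp (hν n) (hvar n)
  have hf : Pairwise (Disjoint on fun n => support (f n)) := fun m n hmn =>
    (hUdisj hmn).mono (hfU m) (hfU n)
  obtain ⟨V, hV, hVe⟩ := exists_c0_clm_of_pairwise_disjoint_support hf₁ hf
  refine ⟨V, hV, ?_⟩
  calc c - 3 * ε < c := by linarith
    _ ≤ ⨅ n, ‖T (V (eSeq n))‖ := le_ciInf fun n => (hVe n).symm ▸ (hfT n).le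

/-- If `T` is a bounded operator on `C(K)` and there are pairwise disjoint
open sets `(U_n)` and functionals `(ν_n)` in the unit ball of `M(K) = C(K)*` with
`|T*ν_n|(U_n) > c` for all `n`, then for every `ε > 0` there is `V : c₀ → C(K)` with
`‖V‖ ≤ 1` and `inf_n ‖T V e_n‖ > c − 3ε`. -/
theorem exists_c0_operator_of_variation_bound
    {K : Type*} [TopologicalSpace K] [CompactSpace K] [T2Space K]
    (T : C(K, ℝ) →L[ℝ] C(K, ℝ)) (c : ℝ)
    (U : ℕ → Set K) (hUopen : ∀ n, IsOpen (U n))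
    (hUdisj : Pairwise (Function.onFun Disjoint U))
    (ν : ℕ → (C(K, ℝ) →L[ℝ] ℝ)) (hν : ∀ n, ‖ν n‖ ≤ 1)
    (hvar : ∀ n, c < varOn ((ν n).comp T) (U n)) :
    ∀ ε : ℝ, 0 < ε →
      ∃ V : C₀(ℕ, ℝ) →L[ℝ] C(K, ℝ), ‖V‖ ≤ 1 ∧
        c - 3 * ε < ⨅ n : ℕ, ‖T (V (eSeq n))‖ :=
  exists_c0_operator_of_variation_bound_general T c U hUdisj ν hν hvar
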